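/- Let a, b be distinct points of H = {x ∈ R^n : Σ x_i = 0}. Set I = {i ∈ [n] : a_i < b_i}. Then I is nonempty and a proper subset of [n], and for every x ∈ H one has max_i (x_i - a_i) ≤ max_i (x_i - b_i) if and only if max_{i∈I} (x_i - a_i) ≤ max_{j∉I} (x_j - b_j). -/

import Mathlib

/-!
Since `a` and `b` have the same coordinate sum and differ, some coordinate has `a i < b i` and
some has `b j ≤ a j`. Split both maxima over `I = {i | a i < b i}` and its complement: on `I`,
`x i - b i < x i - a i`, and off `I`, `x j - a j ≤ x j - b j`. So the `I`-part of `max (x - b)`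
never dominates the `I`-part of `max (x - a)`, and the comparison reduces to the `I`-part of
`x - a` against the `Iᶜ`-part of `x - b`.
-/

noncomputable def tmax {n : ℕ} [NeZero n] (f : Fin n → ℝ) : ℝ :=
  Finset.univ.sup' Finset.univ_nonempty f

section SumComparison

variable {ι M : Type*} [Fintype ι] [AddCommMonoid M] [LinearOrder M] [IsOrderedCancelAddMonoid M]
  {a b : ι → M}

lemma exists_lt_of_sum_eq_sum_of_ne (hsum : ∑ i, a i = ∑ i, b i) (hab : a ≠ b) :
    ∃ i, a i < b i := by
  by_contra! hba
  exact hab (funext fun i => ((Finset.sum_eq_sum_iff_of_le fun i _ => hba i).1 hsum.symm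
    i (Finset.mem_univ i)).symm)

lemma exists_le_of_sum_eq_sum [Nonempty ι] (hsum : ∑ i, a i = ∑ i, b i) : ∃ i, b i ≤ a i := by
  by_contra! hab
  exact (Finset.sum_lt_sum_of_nonempty Finset.univ_nonempty fun i _ => hab i).ne hsum

end SumComparison

lemma Finset.sup'_lt_sup'_of_lt {ι α : Type*} [LinearOrder α] {s : Finset ι} (hs : s.Nonempty)
    {f g : ι → α} (hfg : ∀ i ∈ s, f i < g i) : s.sup' hs f < s.sup' hs g :=
  (Finset.sup'_lt_iff hs).2 fun i hi => (hfg i hi).trans_le (Finset.le_sup' g hi)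

lemma Finset.sup'_univ_eq_sup'_sup_sup'_compl {ι α : Type*} [Fintype ι] [DecidableEq ι]
    [SemilatticeSup α] {s : Finset ι} (hs : s.Nonempty) (hsc : sᶜ.Nonempty) (f : ι → α) :
    Finset.univ.sup' (hs.mono (Finset.subset_univ s)) f = s.sup' hs f ⊔ sᶜ.sup' hsc f := by
  rw [← Finset.sup'_union hs hsc]
  congr 1
  exact (Finset.union_compl s).symm

lemma sup_le_sup_iff_of_lt_of_le {α : Type*} [LinearOrder α] {A A' B B' : α} (hA : A' < A)
    (hB : B' ≤ B) : A ⊔ B' ≤ A' ⊔ B ↔ A ≤ B := by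
  refine ⟨fun h => ?_, fun h => sup_le (le_sup_of_le_right h) (le_sup_of_le_right hB)⟩
  rcases le_sup_iff.1 (le_sup_left.trans h) with hAA' | hAB
  · exact absurd hAA' hA.not_ge
  · exact hAB

open Finset in
theorem stmt5 {n : ℕ} [NeZero n] (a b : Fin n → ℝ)
    (ha : ∑ i, a i = 0) (hb : ∑ i, b i = 0) (hab : a ≠ b) :
    ∃ (hI : (Finset.univ.filter (fun i => a i < b i)).Nonempty)
      (hJ : ((Finset.univ.filter (fun i => a i < b i))ᶜ).Nonempty),
      ∀ x : Fin n → ℝ, ∑ i, x i = 0 →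
        (tmax (fun i => x i - a i) ≤ tmax (fun i => x i - b i) ↔
          (Finset.univ.filter (fun i => a i < b i)).sup' hI (fun i => x i - a i) ≤
            ((Finset.univ.filter (fun i => a i < b i))ᶜ).sup' hJ (fun j => x j - b j)) := by
  set I := Finset.univ.filter (fun i => a i < b i)
  have hsum : ∑ i, a i = ∑ i, b i := ha.trans hb.symm
  obtain ⟨i, hi⟩ := exists_lt_of_sum_eq_sum_of_ne hsum hab
  obtain ⟨j, hj⟩ := exists_le_of_sum_eq_sum hsum
  have hI : I.Nonempty := ⟨i, by simpa [I] using hi⟩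
  have hJ : Iᶜ.Nonempty := ⟨j, by simpa [I] using hj⟩
  refine ⟨hI, hJ, fun x _ => ?_⟩
  rw [tmax, tmax, sup'_univ_eq_sup'_sup_sup'_compl hI hJ,
    sup'_univ_eq_sup'_sup_sup'_compl hI hJ]
  refine sup_le_sup_iff_of_lt_of_le (sup'_lt_sup'_of_lt hI fun k hk => ?_)
    (sup'_mono_fun fun k hk => ?_)
  · have : a k < b k := (mem_filter.1 hk).2
    linarith
  · have : b k ≤ a k := by simpa [I] using hk
    linarith
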